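/- arXiv:2410.18949 — 2 statements merged into one kernel-verified Lean document; each statement's English description precedes it below -/
import Mathlib

section
/- For a Schwartz function f : ℝ → ℂ and h > 0, the Poisson summation formula holds in the form ∑_{n∈ℤ} h·f(hn)·e^{-i n θ} = ∑_{m∈ℤ} f̂((θ + 2πm)/h) for every θ ∈ ℝ, where f̂(ξ) = ∫_ℝ f(x) e^{-i x ξ} dx. -/
/-!
Rescale `g x = f (h x)`, so that `f̂((θ + 2πm)/h) = h · 𝓕 g (θ/2π + m)` in Mathlib's normalization
`𝓕 g ξ = ∫ g x e^{-2πixξ} dx`. Applying Poisson summation `∑ φ(x + n) = ∑ 𝓕 φ(n) e^{2πinx}` to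
`φ = 𝓕 g` and using Fourier inversion `𝓕 (𝓕 g) n = g (-n)` gives
`∑ g(n) e^{-inθ} = ∑ 𝓕 g (θ/2π + m)`.
-/

open MeasureTheory Complex

open scoped FourierTransform Real SchwartzMap

theorem Real.fourier_comp_mul_right {E : Type*} [NormedAddCommGroup E] [NormedSpace ℂ E]
    (f : ℝ → E) {a : ℝ} (ha : a ≠ 0) (ξ : ℝ) :
    𝓕 (fun x ↦ f (x * a)) ξ = |a|⁻¹ • 𝓕 f (ξ / a) := by
  simp only [Real.fourier_real_eq]
  rw [← abs_inv, ← Measure.integral_comp_mul_right]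
  congr! 4 with x
  field_simp

theorem Real.fourier_div_two_pi_eq_integral (f : ℝ → ℂ) (ξ : ℝ) :
    𝓕 f (ξ / (2 * π)) = ∫ x, f x * Complex.exp (-I * x * ξ) := by
  rw [Real.fourier_real_eq_integral_exp_smul]
  congr! 2 with x
  rw [smul_eq_mul, mul_comm]
  congr 2
  push_cast
  field_simp

theorem SchwartzMap.tsum_mul_fourier_neg_eq_tsum_fourier (g : 𝓢(ℝ, ℂ)) (x : ℝ) :
    ∑' n : ℤ, g n * fourier (-n) (x : UnitAddCircle) = ∑' m : ℤ, 𝓕 g (x + m) := by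
  have fourier_fourier (y : ℝ) : 𝓕 (𝓕 g) y = g (-y) := by
    have := congr($(FourierTransform.fourierInv_fourier_eq (F := 𝓢(ℝ, ℂ)) g) (-y))
    rwa [fourierInv_coe, Real.fourierInv_eq_fourier_neg, neg_neg] at this
  rw [SchwartzMap.tsum_eq_tsum_fourier, ← (Equiv.neg ℤ).tsum_eq]
  simp [fourier_fourier]

/-- Poisson summation for sampled Schwartz functions:
`∑_{n∈ℤ} h f(hn) e^{-inθ} = ∑_{m∈ℤ} f̂((θ+2πm)/h)` where `f̂(ξ) = ∫ f(x) e^{-ixξ} dx`. -/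
theorem poisson_summation_sampled (f : SchwartzMap ℝ ℂ) (h : ℝ) (hh : 0 < h) (θ : ℝ) :
    (∑' n : ℤ, (h : ℂ) * f (h * n) * Complex.exp (-Complex.I * n * θ))
      = ∑' m : ℤ, ∫ x : ℝ, f x * Complex.exp (-Complex.I * x * ((θ + 2 * Real.pi * m) / h)) := by
  set g : 𝓢(ℝ, ℂ) := SchwartzMap.compCLMOfContinuousLinearEquiv ℂ
    (ContinuousLinearEquiv.unitsEquivAut ℝ (Units.mk0 h hh.ne')) f
  have hg (x : ℝ) : g x = f (x * h) := rfl
  calc (∑' n : ℤ, (h : ℂ) * f (h * n) * Complex.exp (-Complex.I * n * θ))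
      = h * ∑' n : ℤ, g n * fourier (-n) ((θ / (2 * π) : ℝ) : UnitAddCircle) := by
        rw [← tsum_mul_left]
        congr! 2 with n
        rw [hg, fourier_coe_apply, mul_comm (n : ℝ), mul_assoc]
        congr 3
        push_cast
        field_simp
    _ = ∑' m : ℤ, h * 𝓕 g (θ / (2 * π) + m) := by
        rw [SchwartzMap.tsum_mul_fourier_neg_eq_tsum_fourier, tsum_mul_left]
    _ = ∑' m : ℤ, 𝓕 (f : ℝ → ℂ) ((θ / (2 * π) + m) / h) := by
        refine tsum_congr fun m ↦ ?_
        change (h : ℂ) * 𝓕 (fun x ↦ f (x * h)) _ = _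
        rw [Real.fourier_comp_mul_right _ hh.ne', abs_of_pos hh,
          Complex.real_smul, ← mul_assoc, ofReal_inv, mul_inv_cancel₀ (by exact_mod_cast hh.ne'),
          one_mul]
    _ = _ := by
        refine tsum_congr fun m ↦ ?_
        rw [show (θ / (2 * π) + m) / h = (θ + 2 * π * m) / h / (2 * π) by field_simp,
          Real.fourier_div_two_pi_eq_integral]
        push_cast
        rfl
end

section
/- Let h > 0 and let f, g ∈ L²(ℝ) both have Fourier transforms supported in [-π/h, π/h]. Then ∫_ℝ f(x) · conj(g(x)) dx = h ∑_{n∈ℤ} f(hn) · conj(g(hn)). In particular the map f ↦ (h^{1/2} f(hn))_{n∈ℤ} is an isometry from such band-limited functions in L²(ℝ) to ℓ²(ℤ). -/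
/-!
Write `f x = (2π)⁻¹ ∫_{-π/h}^{π/h} F ξ exp (i x ξ) dξ`. On the circle `ℝ ⧸ (2π/h)ℤ` the function `ξ ↦ F ξ * exp (i t ξ)`,
restricted to the band `(-π/h, π/h]`, has Fourier coefficients `h f (t - h n)`. Parseval's identity
on the circle therefore gives, for every `t`,
`h ∑ₙ f (t + h n) conj (g (t + h n)) = (2π)⁻¹ ∫ F conj G`,
so the `h`-periodization of `f conj g` is constant, and integrating it over one period gives
`∫ f conj g = h ∑ₙ f (h n) conj (g (h n))`.

Parseval needs `F ∈ L²` on the band, while only `F ∈ L¹` is assumed. Since `|f|²` is integrable,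
`∑ₙ |f (t + h n)|² < ∞` for some `t`; so the coefficients of `F exp (i t ·)` are square summable,
and an integrable function on the circle with square summable coefficients is in `L²`, because
integrable functions are determined by their Fourier coefficients.
-/

open MeasureTheory Complex Set Filter Topology AddCircle
open scoped Real ComplexConjugate NNReal ENNReal BoundedContinuousFunction

theorem ae_eq_zero_of_forall_integral_smul_eq_zero {X E : Type*} [TopologicalSpace X]
    [HasOuterApproxClosed X] [MeasurableSpace X] [BorelSpace X] [NormedAddCommGroup E]
    [NormedSpace ℝ E] [CompleteSpace E] {μ : Measure X} {w : X → E} (hw : Integrable w μ)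
    (h : ∀ φ : X →ᵇ ℝ, ∫ x, φ x • w x ∂μ = 0) : w =ᵐ[μ] 0 := by
  refine ae_eq_zero_of_forall_setIntegral_isClosed_eq_zero hw fun s hs => ?_
  let φ : ℕ → X →ᵇ ℝ := fun n => (hs.apprSeq n).comp _ (LipschitzWith.subtype_val _)
  have hφ (n : ℕ) (x : X) : φ n x = hs.apprSeq n x := rfl
  have hlim : Tendsto (fun n => ∫ x, φ n x • w x ∂μ) atTop (𝓝 (∫ x, s.indicator w x ∂μ)) := by
    refine tendsto_integral_of_dominated_convergence (fun x => ‖w x‖)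
      (fun n => (φ n).continuous.aestronglyMeasurable.smul hw.1) hw.norm
      (fun n => ae_of_all _ fun x => ?_) (ae_of_all _ fun x => ?_)
    · rw [norm_smul, hφ]
      exact mul_le_of_le_one_left (norm_nonneg _)
        (by simpa using HasOuterApproxClosed.apprSeq_apply_le_one hs n x)
    · simp only [hφ]
      have hx := (continuous_apply x).tendsto _ |>.comp (HasOuterApproxClosed.tendsto_apprSeq hs)
      have hind : s.indicator w x = NNReal.toReal (s.indicator (fun _ => 1) x) • w x := by
        by_cases hxs : x ∈ s <;> simp [hxs]
      rw [hind]
      exact ((NNReal.continuous_coe.tendsto _).comp hx).smul_const (w x)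
  rw [← integral_indicator hs.measurableSet]
  exact tendsto_nhds_unique hlim (by simp [h])

section FourierCoeff

variable {T : ℝ} [Fact (0 < T)]

section

variable {E : Type*} [NormedAddCommGroup E] [NormedSpace ℂ E]

theorem fourierCoeff.sub {f g : AddCircle T → E} (hf : Integrable f haarAddCircle)
    (hg : Integrable g haarAddCircle) :
    fourierCoeff (f - g) = fourierCoeff f - fourierCoeff g := by
  ext n
  simpa [fourierCoeff, -fourier_apply, smul_sub] using
    integral_sub (hf.fourier_smul (-n)) (hg.fourier_smul (-n))

theorem integral_smul_eq_zero_of_fourierCoeff_eq_zero {w : AddCircle T → E}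
    (hw : Integrable w haarAddCircle) (hcoeff : ∀ n, fourierCoeff w n = 0)
    (φ : C(AddCircle T, ℂ)) : ∫ x, φ x • w x ∂haarAddCircle = 0 := by
  have hint (ψ : C(AddCircle T, ℂ)) : Integrable (fun x => ψ x • w x) haarAddCircle :=
    hw.bdd_smul ‖ψ‖ ψ.continuous.aestronglyMeasurable (ae_of_all _ ψ.norm_coe_le_norm)
  let Λ : C(AddCircle T, ℂ) →L[ℂ] E := LinearMap.mkContinuous
    { toFun := fun ψ => ∫ x, ψ x • w x ∂haarAddCircle
      map_add' := fun ψ χ => by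
        simp only [ContinuousMap.add_apply, add_smul]
        exact integral_add (hint ψ) (hint χ)
      map_smul' := fun c ψ => by
        simp only [ContinuousMap.smul_apply, smul_eq_mul, mul_smul, integral_smul,
          RingHom.id_apply] }
    (∫ x, ‖w x‖ ∂haarAddCircle) fun ψ => by
      rw [mul_comm, ← integral_const_mul]
      refine norm_integral_le_of_norm_le (hw.norm.const_mul _) (ae_of_all _ fun x => ?_)
      rw [norm_smul]
      gcongr
      exact ψ.norm_coe_le_norm x
  have hΛ : Λ = 0 := by
    refine ContinuousLinearMap.ext_on
      (Submodule.dense_iff_topologicalClosure_eq_top.mpr span_fourier_closure_eq_top) ?_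
    rintro _ ⟨n, rfl⟩
    simpa [Λ, fourierCoeff, neg_neg] using hcoeff (-n)
  exact congr($hΛ φ)

theorem ae_eq_zero_of_fourierCoeff_eq_zero [CompleteSpace E] {w : AddCircle T → E}
    (hw : Integrable w haarAddCircle) (hcoeff : ∀ n, fourierCoeff w n = 0) :
    w =ᵐ[haarAddCircle] 0 :=
  ae_eq_zero_of_forall_integral_smul_eq_zero hw fun φ => by
    simpa [Complex.coe_smul] using integral_smul_eq_zero_of_fourierCoeff_eq_zero hw hcoeff
      ⟨fun x => (φ x : ℂ), continuous_ofReal.comp φ.continuous⟩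

end

theorem memLp_two_of_memℓp_fourierCoeff {u : AddCircle T → ℂ} (hu : Integrable u haarAddCircle)
    (hc : Memℓp (fourierCoeff u) 2) : MemLp u 2 haarAddCircle := by
  set v := (fourierBasis (T := T)).repr.symm ⟨_, hc⟩
  have hv : fourierCoeff v = fourierCoeff u := by
    ext n
    rw [← fourierBasis_repr, LinearIsometryEquiv.apply_symm_apply]
  have hvint : Integrable v haarAddCircle := (Lp.memLp v).integrable one_le_two
  have hsub := ae_eq_zero_of_fourierCoeff_eq_zero (hu.sub hvint)
    fun n => by rw [fourierCoeff.sub hu hvint, hv, sub_self, Pi.zero_apply]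
  exact (Lp.memLp v).ae_eq (eventuallyEq_iff_sub.mpr hsub).symm

theorem hasSum_prod_fourierCoeff (f g : Lp ℂ 2 (@haarAddCircle T _)) :
    HasSum (fun i ↦ conj (fourierCoeff f i) * fourierCoeff g i)
      (∫ t, conj (f t) * g t ∂haarAddCircle) := by
  simp_rw [mul_comm (conj _)]
  refine HasSum.congr_fun (fourierBasis.hasSum_inner_mul_inner f g) (fun n ↦ ?_)
  simp only [← fourierBasis_repr, HilbertBasis.repr_apply_apply, inner_conj_symm,
    mul_comm (inner ℂ f _)]

theorem memLp_liftIoc_iff {a : ℝ} {f : ℝ → ℂ} {p : ℝ≥0∞} :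
    MemLp (liftIoc T a f) p haarAddCircle ↔ MemLp f p (volume.restrict (Ioc a (a + T))) := by
  refine ⟨fun hf => ?_, fun hf => hf.memLp_liftIoc.haarAddCircle⟩
  refine (hf.of_haarAddCircle.comp_measurePreserving (AddCircle.measurePreserving_mk T a)).ae_eq ?_
  filter_upwards [ae_restrict_mem measurableSet_Ioc] with x hx
  exact liftIoc_coe_apply hx

end FourierCoeff

theorem memLp_two_of_memℓp_fourierCoeffOn {a b : ℝ} (hab : a < b) {f : ℝ → ℂ}
    (hf : IntegrableOn f (Ioc a b)) (hc : Memℓp (fourierCoeffOn hab f) 2) :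
    MemLp f 2 (volume.restrict (Ioc a b)) := by
  have := Fact.mk (sub_pos.mpr hab)
  rw [← add_sub_cancel a b] at hf ⊢
  rw [IntegrableOn, ← memLp_one_iff_integrable, ← memLp_liftIoc_iff, memLp_one_iff_integrable] at hf
  exact memLp_liftIoc_iff.mp (memLp_two_of_memℓp_fourierCoeff hf hc)

theorem hasSum_prod_fourierCoeffOn {a b : ℝ} (hab : a < b) {f g : ℝ → ℂ}
    (hf : MemLp f 2 (volume.restrict (Ioc a b))) (hg : MemLp g 2 (volume.restrict (Ioc a b))) :
    HasSum (fun n => conj (fourierCoeffOn hab f n) * fourierCoeffOn hab g n)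
      ((b - a)⁻¹ • ∫ x in a..b, conj (f x) * g x) := by
  have := Fact.mk (sub_pos.mpr hab)
  rw [← add_sub_cancel a b] at hf hg
  have hf' := (memLp_liftIoc_iff (T := b - a)).mpr hf
  have hg' := (memLp_liftIoc_iff (T := b - a)).mpr hg
  convert hasSum_prod_fourierCoeff hf'.toLp hg'.toLp using 1
  · simp [fourierCoeff_congr_ae hf'.coeFn_toLp, fourierCoeff_congr_ae hg'.coeFn_toLp,
      fourierCoeff_liftIoc_eq]
  · rw [integral_congr_ae (g := liftIoc (b - a) a fun x => conj (f x) * g x)]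
    · rw [integral_haarAddCircle, AddCircle.integral_liftIoc_eq_intervalIntegral, add_sub_cancel]
    filter_upwards [hf'.coeFn_toLp, hg'.coeFn_toLp] with x hfx hgx
    rw [hfx, hgx]
    rfl

section Periodization

variable {E : Type*} [NormedAddCommGroup E] {φ : ℝ → E} {h : ℝ}

theorem hasSum_setIntegral_Ioc_comp_add_mul [NormedSpace ℝ E] (hφ : Integrable φ) (hh : 0 < h) :
    HasSum (fun n : ℤ => ∫ t in Ioc 0 h, φ (t + h * n)) (∫ x, φ x) := by
  have hunion := hasSum_integral_iUnion (fun n : ℤ => measurableSet_Ioc)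
    (pairwise_disjoint_Ioc_zsmul h) hφ.integrableOn
  rw [iUnion_Ioc_zsmul hh, setIntegral_univ] at hunion
  refine hunion.congr_fun fun n => ?_
  rw [← intervalIntegral.integral_of_le hh.le, intervalIntegral.integral_comp_add_right,
    intervalIntegral.integral_of_le (by linarith)]
  simp only [zsmul_eq_mul, Int.cast_add, Int.cast_one]
  congr 2
  congr 1 <;> ring

theorem integral_eq_smul_of_hasSum_comp_add_mul [NormedSpace ℝ E] [CompleteSpace E]
    (hφ : Integrable φ) (hh : 0 < h) {D : E} (hD : ∀ t, HasSum (fun n : ℤ => φ (t + h * n)) D) :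
    ∫ x, φ x = h • D := by
  have hint (n : ℤ) : Integrable (fun t => φ (t + h * n)) (volume.restrict (Ioc 0 h)) :=
    (hφ.comp_add_right _).restrict
  calc ∫ x, φ x = ∑' n : ℤ, ∫ t in Ioc 0 h, φ (t + h * n) :=
        (hasSum_setIntegral_Ioc_comp_add_mul hφ hh).tsum_eq.symm
    _ = ∫ t in Ioc 0 h, ∑' n : ℤ, φ (t + h * n) :=
        integral_tsum_of_summable_integral_norm hint
          (hasSum_setIntegral_Ioc_comp_add_mul hφ.norm hh).summable
    _ = h • D := by simp [(hD _).tsum_eq, hh.le]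

theorem exists_summable_norm_comp_add_mul (hφ : Integrable φ) (hh : 0 < h) :
    ∃ t, Summable fun n : ℤ => ‖φ (t + h * n)‖ := by
  have hsum : ∑' n : ℤ, eLpNorm (fun t => φ (t + h * n)) 1 (volume.restrict (Ioc 0 h)) ≠ ∞ := by
    simp_rw [eLpNorm_one_eq_lintegral_enorm, ← ofReal_integral_norm_eq_lintegral_enorm
      (hφ.comp_add_right _).restrict]
    rw [← ENNReal.ofReal_tsum_of_nonneg (fun n => integral_nonneg fun t => norm_nonneg _)
      (hasSum_setIntegral_Ioc_comp_add_mul hφ.norm hh).summable]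
    exact ENNReal.ofReal_ne_top
  have : (ae (volume.restrict (Ioc 0 h))).NeBot := by
    rw [ae_neBot, Ne, Measure.restrict_eq_zero]
    simp [hh]
  exact (summable_norm_of_tsum_eLpNorm_ne_top le_rfl
    (fun n => (hφ.comp_add_right _).restrict.1) hsum).exists

end Periodization

theorem norm_exp_I_mul_ofReal_mul_ofReal (s t : ℝ) : ‖exp (I * s * t)‖ = 1 := by
  rw [mul_assoc, ← ofReal_mul, norm_exp_I_mul_ofReal]

theorem memLp_mul_exp_I_mul_iff {μ : Measure ℝ} {F : ℝ → ℂ} {p : ℝ≥0∞} (t : ℝ) :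
    MemLp (fun ξ => F ξ * exp (I * t * ξ)) p μ ↔ MemLp F p μ := by
  have hmodulate (G : ℝ → ℂ) (s : ℝ) (hG : MemLp G p μ) :
      MemLp (fun ξ => G ξ * exp (I * s * ξ)) p μ :=
    hG.of_le (hG.1.mul (by fun_prop : Continuous fun ξ : ℝ => exp (I * s * ξ)).aestronglyMeasurable)
      (ae_of_all _ fun ξ => by simp [norm_exp_I_mul_ofReal_mul_ofReal])
  refine ⟨fun hF => ?_, hmodulate F t⟩
  convert hmodulate _ (-t) hF using 2 with ξ
  rw [mul_assoc, ← exp_add, ofReal_neg, show I * t * ξ + I * -t * ξ = 0 by ring, exp_zero, mul_one]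

theorem integral_eq_setIntegral_Ioc_of_forall_lt_abs {E : Type*} [NormedAddCommGroup E]
    [NormedSpace ℝ E] {φ : ℝ → E} {c : ℝ} (hφ : ∀ ξ, c < |ξ| → φ ξ = 0) :
    ∫ ξ, φ ξ = ∫ ξ in Ioc (-c) c, φ ξ := by
  rw [← integral_Icc_eq_integral_Ioc, setIntegral_eq_integral_of_forall_compl_eq_zero]
  exact fun ξ hξ => hφ ξ (lt_of_not_ge fun hle => hξ (abs_le.mp hle))

noncomputable def bandInvFourier (h : ℝ) (F : ℝ → ℂ) (x : ℝ) : ℂ :=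
  (1 / (2 * π)) • ∫ ξ in Ioc (-(π / h)) (π / h), F ξ * exp (I * x * ξ)

section BandLimited

variable {h : ℝ} {F G : ℝ → ℂ}

theorem fourierCoeffOn_mul_exp_eq_bandInvFourier (hh : 0 < h) (F : ℝ → ℂ) (t : ℝ) (n : ℤ) :
    fourierCoeffOn (neg_lt_self (by positivity : 0 < π / h)) (fun ξ => F ξ * exp (I * t * ξ)) n
      = h * bandInvFourier h F (t - h * n) := by
  have hexp (ξ : ℝ) : fourier (-n) (ξ : AddCircle (π / h - -(π / h))) • (F ξ * exp (I * t * ξ))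
      = F ξ * exp (I * ↑(t - h * n) * ξ) := by
    rw [fourier_coe_apply, smul_eq_mul, mul_left_comm, ← exp_add]
    congr 2
    push_cast
    field_simp
    ring
  rw [fourierCoeffOn_eq_integral, intervalIntegral.integral_of_le (neg_le_self (by positivity)),
    bandInvFourier]
  simp_rw [hexp]
  rw [real_smul, real_smul, ← mul_assoc]
  congr 1
  push_cast
  field_simp
  ring

theorem memLp_two_of_memLp_bandInvFourier (hh : 0 < h)
    (hF : IntegrableOn F (Ioc (-(π / h)) (π / h))) (hf2 : MemLp (bandInvFourier h F) 2) :
    MemLp F 2 (volume.restrict (Ioc (-(π / h)) (π / h))) := by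
  obtain ⟨t, ht⟩ := exists_summable_norm_comp_add_mul (hf2.integrable_norm_pow two_ne_zero) hh
  have hc : Memℓp (fourierCoeffOn (neg_lt_self (by positivity : 0 < π / h))
      (fun ξ => F ξ * exp (I * t * ξ))) 2 := by
    refine memℓp_gen (((ht.comp_injective neg_injective).mul_left (h ^ 2)).congr fun n => ?_)
    simp [fourierCoeffOn_mul_exp_eq_bandInvFourier hh, mul_pow, sub_eq_add_neg]
  rw [← memLp_mul_exp_I_mul_iff t]
  refine memLp_two_of_memℓp_fourierCoeffOn _ ?_ hc
  exact memLp_one_iff_integrable.mp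
    ((memLp_mul_exp_I_mul_iff t).mpr (memLp_one_iff_integrable.mpr hF))

theorem hasSum_bandInvFourier_mul_conj (hh : 0 < h)
    (hF : MemLp F 2 (volume.restrict (Ioc (-(π / h)) (π / h))))
    (hG : MemLp G 2 (volume.restrict (Ioc (-(π / h)) (π / h)))) (t : ℝ) :
    HasSum (fun n : ℤ => bandInvFourier h F (t + h * n) * conj (bandInvFourier h G (t + h * n)))
      ((2 * π * h)⁻¹ • ∫ ξ in -(π / h)..π / h, F ξ * conj (G ξ)) := by
  have hparseval := hasSum_prod_fourierCoeffOn (neg_lt_self (by positivity : 0 < π / h))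
    ((memLp_mul_exp_I_mul_iff t).mpr hG) ((memLp_mul_exp_I_mul_iff t).mpr hF)
  have hphase (ξ : ℝ) :
      conj (G ξ * exp (I * t * ξ)) * (F ξ * exp (I * t * ξ)) = F ξ * conj (G ξ) := by
    rw [map_mul, mul_mul_mul_comm, conj_mul', norm_exp_I_mul_ofReal_mul_ofReal,
      mul_comm (conj (G ξ))]
    simp
  simp only [fourierCoeffOn_mul_exp_eq_bandInvFourier hh, hphase] at hparseval
  have hvalue : (2 * π * h)⁻¹ • ∫ ξ in -(π / h)..π / h, F ξ * conj (G ξ)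
      = ((h : ℂ) ^ 2)⁻¹ * ((π / h - -(π / h))⁻¹ • ∫ ξ in -(π / h)..π / h, F ξ * conj (G ξ)) := by
    rw [real_smul, real_smul]
    push_cast
    field_simp
    ring
  have hh' : (h : ℂ) ≠ 0 := by exact_mod_cast hh.ne'
  rw [hvalue, ← (Equiv.neg ℤ).hasSum_iff]
  refine (hparseval.mul_left _).congr_fun fun n => ?_
  simp only [Equiv.neg_apply, Function.comp_apply, Int.cast_neg, mul_neg, sub_eq_add_neg, map_mul,
    conj_ofReal]
  field_simp

theorem integral_bandInvFourier_mul_conj (hh : 0 < h)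
    (hF : IntegrableOn F (Ioc (-(π / h)) (π / h))) (hG : IntegrableOn G (Ioc (-(π / h)) (π / h)))
    (hf2 : MemLp (bandInvFourier h F) 2) (hg2 : MemLp (bandInvFourier h G) 2) :
    ∫ x, bandInvFourier h F x * conj (bandInvFourier h G x)
      = h * ∑' n : ℤ, bandInvFourier h F (h * n) * conj (bandInvFourier h G (h * n)) := by
  have hsum := hasSum_bandInvFourier_mul_conj hh (memLp_two_of_memLp_bandInvFourier hh hF hf2)
    (memLp_two_of_memLp_bandInvFourier hh hG hg2)
  rw [integral_eq_smul_of_hasSum_comp_add_mul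
    (φ := fun x => bandInvFourier h F x * conj (bandInvFourier h G x))
    (hf2.integrable_mul hg2.star) hh hsum, ← (hsum 0).tsum_eq]
  simp [real_smul]

end BandLimited

/-- For band-limited L² functions `f, g` (Fourier transforms `F, G` supported in
`[-π/h, π/h]`), the inner product equals `h` times the sum over lattice samples:
`∫ f conj(g) = h ∑_n f(hn) conj(g(hn))`; in particular `f ↦ (h^{1/2} f(hn))_n` is an
isometry into ℓ²: `∫ |f|² = h ∑_n |f(hn)|²`. -/
theorem band_limited_sampling_isometry (h : ℝ) (hh : 0 < h) (f g F G : ℝ → ℂ)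
    (hf2 : MemLp f 2 volume) (hg2 : MemLp g 2 volume)
    (hFint : Integrable F) (hGint : Integrable G)
    (hFsupp : ∀ ξ : ℝ, Real.pi / h < |ξ| → F ξ = 0)
    (hGsupp : ∀ ξ : ℝ, Real.pi / h < |ξ| → G ξ = 0)
    (hfinv : ∀ x : ℝ, f x = (1 / (2 * Real.pi)) •
      ∫ ξ : ℝ, F ξ * Complex.exp (Complex.I * x * ξ))
    (hginv : ∀ x : ℝ, g x = (1 / (2 * Real.pi)) •
      ∫ ξ : ℝ, G ξ * Complex.exp (Complex.I * x * ξ)) :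
    (∫ x : ℝ, f x * starRingEnd ℂ (g x)) = (h : ℂ) * ∑' n : ℤ, f (h * n) * starRingEnd ℂ (g (h * n))
    ∧ (∫ x : ℝ, ‖f x‖ ^ 2) = h * ∑' n : ℤ, ‖f (h * n)‖ ^ 2 := by
  have hband {u U : ℝ → ℂ} (hU : ∀ ξ : ℝ, π / h < |ξ| → U ξ = 0)
      (hu : ∀ x : ℝ, u x = (1 / (2 * π)) • ∫ ξ : ℝ, U ξ * exp (I * x * ξ)) :
      u = bandInvFourier h U :=
    funext fun x => by
      rw [hu, integral_eq_setIntegral_Ioc_of_forall_lt_abs fun ξ hξ => by rw [hU ξ hξ, zero_mul],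
        bandInvFourier]
  obtain rfl := hband hFsupp hfinv
  obtain rfl := hband hGsupp hginv
  have hsquare := integral_bandInvFourier_mul_conj hh hFint.integrableOn hFint.integrableOn hf2 hf2
  simp_rw [mul_conj'] at hsquare
  exact ⟨integral_bandInvFourier_mul_conj hh hFint.integrableOn hGint.integrableOn hf2 hg2,
    by exact_mod_cast hsquare⟩
end
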